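/- A vertex X is removable in a DAG G if and only if the following two conditions are satisfied for every child Z of X: (Condition 1) Ne(X;G) ⊆ Ne(Z;G) ∪ {Z}, where Ne denotes the set of neighbors; and (Condition 2) for every V ∈ Ch(X;G) ∩ Pa(Z;G), Pa(V;G) ⊆ Pa(Z;G). -/

import Mathlib

/-!
Common framework: mixed graphs, paths, colliders, m-separation, MAGs,
removability, Markov boundaries, latent projection, orders.
-/

/-- A mixed graph over a vertex set `verts`, with directed edges `dir` and
bidirected edges `bi`. -/
structure MixedGraph (V : Type*) where
  verts : Set V
  dir : V → V → Prop
  bi : V → V → Prop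
  bi_symm : ∀ {a b : V}, bi a b → bi b a
  dir_mem : ∀ {a b : V}, dir a b → a ∈ verts ∧ b ∈ verts
  bi_mem : ∀ {a b : V}, bi a b → a ∈ verts ∧ b ∈ verts

namespace MixedGraph

variable {V : Type*}

/-- Two vertices are neighbors (adjacent) if joined by a directed or bidirected edge. -/
def adj (G : MixedGraph V) (a b : V) : Prop := G.dir a b ∨ G.dir b a ∨ G.bi a b

/-- `a` is an ancestor of `b` (every vertex is an ancestor of itself). -/
def anc (G : MixedGraph V) (a b : V) : Prop := Relation.ReflTransGen G.dir a b

/-- The set of neighbors of `a`. -/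
def neighbors (G : MixedGraph V) (a : V) : Set V := {b | b ≠ a ∧ G.adj a b}

/-- The set of parents of `a`. -/
def parents (G : MixedGraph V) (a : V) : Set V := {b | G.dir b a}

/-- The set of children of `a`. -/
def children (G : MixedGraph V) (a : V) : Set V := {b | G.dir a b}

/-- Co-parents of `a` (in a DAG): non-neighbors sharing a common child with `a`. -/
def coparents (G : MixedGraph V) (a : V) : Set V :=
  {b | b ≠ a ∧ ¬ G.adj a b ∧ ∃ c, G.dir a c ∧ G.dir b c}

/-- The district of `a`: vertices joined to `a` by a path of bidirected edges
(including `a` itself). -/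
def district (G : MixedGraph V) (a : V) : Set V := {b | Relation.ReflTransGen G.bi b a}

/-- `PaP(a) = Pa(a) ∪ Dis(a) ∪ Pa(Dis(a))`. -/
def paP (G : MixedGraph V) (a : V) : Set V :=
  G.parents a ∪ G.district a ∪ ⋃ b ∈ G.district a, G.parents b

/-- The induced subgraph of `G` over `W`. -/
def induce (G : MixedGraph V) (W : Set V) : MixedGraph V where
  verts := G.verts ∩ W
  dir a b := G.dir a b ∧ a ∈ W ∧ b ∈ W
  bi a b := G.bi a b ∧ a ∈ W ∧ b ∈ W
  bi_symm h := ⟨G.bi_symm h.1, h.2.2, h.2.1⟩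
  dir_mem h := ⟨⟨(G.dir_mem h.1).1, h.2.1⟩, (G.dir_mem h.1).2, h.2.2⟩
  bi_mem h := ⟨⟨(G.bi_mem h.1).1, h.2.1⟩, (G.bi_mem h.1).2, h.2.2⟩

end MixedGraph

/-- Possible orientations of an edge along a path: `fwd` is `a → b`,
`bwd` is `a ← b`, `bidir` is `a ↔ b`. -/
inductive EdgeDir
  | fwd | bwd | bidir

/-- Validity of an orientation mark between consecutive path vertices. -/
def edirValid {V : Type*} (G : MixedGraph V) (a b : V) : EdgeDir → Prop
  | .fwd => G.dir a b
  | .bwd => G.dir b a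
  | .bidir => G.bi a b

/-- The edge has an arrowhead at its second (right) endpoint. -/
def headAt2 (e : EdgeDir) : Prop := e = .fwd ∨ e = .bidir

/-- The edge has an arrowhead at its first (left) endpoint. -/
def headAt1 (e : EdgeDir) : Prop := e = .bwd ∨ e = .bidir

/-- A path in a mixed graph `G` from `x` to `y`: a sequence of distinct vertices
`vert 0, …, vert len` together with an oriented edge of `G` between consecutive
vertices. -/
structure MPath {V : Type*} (G : MixedGraph V) (x y : V) where
  len : ℕ
  len_pos : 0 < len
  vert : ℕ → V
  edir : ℕ → EdgeDir
  first : vert 0 = x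
  last : vert len = y
  mem : ∀ i, i ≤ len → vert i ∈ G.verts
  inj : ∀ i j, i ≤ len → j ≤ len → vert i = vert j → i = j
  valid : ∀ i, i < len → edirValid G (vert i) (vert (i + 1)) (edir i)

namespace MPath

variable {V : Type*} {G : MixedGraph V} {x y : V}

/-- The vertex at interior position `i` (where `0 < i < len`) is a collider on the path:
both incident path edges have an arrowhead at it. -/
def collider (p : MPath G x y) (i : ℕ) : Prop :=
  headAt2 (p.edir (i - 1)) ∧ headAt1 (p.edir i)

/-- The path is blocked by `Z`: some interior vertex is a collider that is not an
ancestor of any vertex of `Z ∪ {x, y}`, or a non-collider belonging to `Z`. -/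
def blocked (p : MPath G x y) (Z : Set V) : Prop :=
  ∃ i, 0 < i ∧ i < p.len ∧
    ((p.collider i ∧ ∀ w ∈ Z ∪ ({x, y} : Set V), ¬ G.anc (p.vert i) w) ∨
     (¬ p.collider i ∧ p.vert i ∈ Z))

/-- A collider path: every interior vertex is a collider on the path. -/
def isColliderPath (p : MPath G x y) : Prop :=
  ∀ i, 0 < i → i < p.len → p.collider i

/-- An inducing path relative to `W2`: every interior non-collider belongs to `W2`,
and every interior collider is an ancestor of `x` or of `y`. -/
def isInducing (p : MPath G x y) (W2 : Set V) : Prop :=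
  ∀ i, 0 < i → i < p.len →
    (p.collider i → G.anc (p.vert i) x ∨ G.anc (p.vert i) y) ∧
    (¬ p.collider i → p.vert i ∈ W2)

end MPath

/-- `Z` m-separates `x` and `y` in `G`: every path between `x` and `y` is blocked by `Z`. -/
def mSep {V : Type*} (G : MixedGraph V) (x y : V) (Z : Set V) : Prop :=
  ∀ p : MPath G x y, p.blocked Z

namespace MixedGraph

variable {V : Type*}

/-- The Markov boundary of `a` in `G`: vertices `b ≠ a` with a collider path to `a`. -/
def mb (G : MixedGraph V) (a : V) : Set V :=
  {b | b ≠ a ∧ ∃ p : MPath G b a, p.isColliderPath}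

/-- `G` is a maximal ancestral graph (MAG): no directed cycles, no almost directed
cycles, and every pair of distinct non-neighbor vertices is m-separated by some set. -/
structure IsMAG (G : MixedGraph V) : Prop where
  no_dir_cycle : ∀ a b, G.dir a b → ¬ G.anc b a
  no_almost_dir_cycle : ∀ a b, G.bi a b → ¬ G.anc b a
  maximal : ∀ a ∈ G.verts, ∀ b ∈ G.verts, a ≠ b → ¬ G.adj a b →
    ∃ Z ⊆ G.verts \ {a, b}, mSep G a b Z

/-- `G` is a DAG: a MAG with no bidirected edges. -/
def IsDAG (G : MixedGraph V) : Prop := G.IsMAG ∧ ∀ a b, ¬ G.bi a b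

/-- `x` is removable in `G`: `G` and the induced subgraph `G[verts ∖ {x}]` impose the
same m-separation relations among the vertices of `verts ∖ {x}`. -/
def Removable (G : MixedGraph V) (x : V) : Prop :=
  ∀ y z, y ∈ G.verts → z ∈ G.verts → y ≠ x → z ≠ x → y ≠ z →
    ∀ Z ⊆ G.verts \ {x, y, z},
      (mSep G y z Z ↔ mSep (G.induce (G.verts \ {x})) y z Z)

/-- There is an inducing path between `a` and `b` in `G` relative to `W2`. -/
def InducingAdj (G : MixedGraph V) (W2 : Set V) (a b : V) : Prop :=
  (∃ p : MPath G a b, p.isInducing W2) ∨ (∃ p : MPath G b a, p.isInducing W2)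

/-- The latent projection of `G` onto `W1`: distinct `a, b ∈ W1` are joined iff there is
an inducing path between them in `G` relative to `G.verts ∖ W1`; the edge is `a → b` if
`a` is an ancestor of `b` in `G` but not conversely, and `a ↔ b` if neither is an
ancestor of the other. -/
def project (G : MixedGraph V) (W1 : Set V) : MixedGraph V where
  verts := W1
  dir a b := a ∈ W1 ∧ b ∈ W1 ∧ a ≠ b ∧ InducingAdj G (G.verts \ W1) a b ∧
    G.anc a b ∧ ¬ G.anc b a
  bi a b := a ∈ W1 ∧ b ∈ W1 ∧ a ≠ b ∧ InducingAdj G (G.verts \ W1) a b ∧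
    ¬ G.anc a b ∧ ¬ G.anc b a
  bi_symm h :=
    ⟨h.2.1, h.1, h.2.2.1.symm, Or.symm h.2.2.2.1, h.2.2.2.2.2, h.2.2.2.2.1⟩
  dir_mem h := ⟨h.1, h.2.1⟩
  bi_mem h := ⟨h.1, h.2.1⟩

/-- Two mixed graphs over the same vertex set impose exactly the same m-separation
relations. -/
def MarkovEquiv (G1 G2 : MixedGraph V) : Prop :=
  ∀ a ∈ G1.verts, ∀ b ∈ G1.verts, a ≠ b → ∀ Z ⊆ G1.verts \ {a, b},
    (mSep G1 a b Z ↔ mSep G2 a b Z)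

/-- A list of vertices is an order over (the vertex set of) `G` if it lists each vertex
exactly once. -/
def IsOrder (G : MixedGraph V) (l : List V) : Prop :=
  l.Nodup ∧ ∀ v, v ∈ l ↔ v ∈ G.verts

/-- An r-order of `G`: an order `(X₁, …, Xₙ)` such that each `Xᵢ` is removable in the
induced subgraph `G[{Xᵢ, …, Xₙ}]`. -/
def IsROrder (G : MixedGraph V) (l : List V) : Prop :=
  IsOrder G l ∧ ∀ (i : ℕ) (h : i < l.length),
    Removable (G.induce {v | v ∈ l.drop i}) (l.get ⟨i, h⟩)

/-- A c-order of a DAG `G`: an order `(X₁, …, Xₙ)` such that each `Xᵢ` has no children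
in the induced subgraph `G[{Xᵢ, …, Xₙ}]`. -/
def IsCOrder (G : MixedGraph V) (l : List V) : Prop :=
  IsOrder G l ∧ ∀ (i : ℕ) (h : i < l.length),
    ∀ v, ¬ (G.induce {v' | v' ∈ l.drop i}).dir (l.get ⟨i, h⟩) v

/-- The maximum in-degree of `G`. -/
noncomputable def deltaIn (G : MixedGraph V) : ℕ :=
  sSup {n | ∃ a ∈ G.verts, n = (G.parents a).ncard}

/-- `Δin⁺(G)`: the maximum of `|PaP(a)|` over the vertices of `G`. -/
noncomputable def deltaInPlus (G : MixedGraph V) : ℕ :=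
  sSup {n | ∃ a ∈ G.verts, n = (G.paP a).ncard}

/-- `G` is diamond-free: it contains no induced subgraph on four vertices `a, b, c, d`
whose skeleton has exactly the edges a–b, a–c, a–d, b–d, c–d (with b, c non-adjacent). -/
def DiamondFree (G : MixedGraph V) : Prop :=
  ¬ ∃ a b c d : V, a ∈ G.verts ∧ b ∈ G.verts ∧ c ∈ G.verts ∧ d ∈ G.verts ∧
    a ≠ b ∧ a ≠ c ∧ a ≠ d ∧ b ≠ c ∧ b ≠ d ∧ c ≠ d ∧
    G.adj a b ∧ G.adj a c ∧ G.adj a d ∧ G.adj b d ∧ G.adj c d ∧ ¬ G.adj b c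

end MixedGraph

/-- The cost of an order `(X₁, …, Xₙ)`: `Σₜ |Ne(Xₜ; G_{Vₜ})|` where `Vₜ = {Xₜ, …, Xₙ}`
and `G_{Vₜ}` is the latent projection of `G` onto `Vₜ` (the term for `t = n` is zero). -/
noncomputable def orderCost {V : Type*} (G : MixedGraph V) : List V → ℕ
  | [] => 0
  | x :: rest => ((G.project {v | v ∈ x :: rest}).neighbors x).ncard + orderCost G rest


section Aux

variable {V : Type*}

namespace MixedGraph

lemma adj_symm (G : MixedGraph V) {a b : V} (h : G.adj a b) : G.adj b a := by
  rcases h with h | h | h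
  · exact Or.inr (Or.inl h)
  · exact Or.inl h
  · exact Or.inr (Or.inr (G.bi_symm h))

lemma anc_mono {G H : MixedGraph V} (h : ∀ a b, G.dir a b → H.dir a b) {a b : V}
    (hab : G.anc a b) : H.anc a b :=
  Relation.ReflTransGen.mono (fun _ _ hd => h _ _ hd) _ _ hab

lemma IsDAG.not_dir_self {G : MixedGraph V} (hG : G.IsDAG) (a : V) : ¬ G.dir a a :=
  fun h => hG.1.no_dir_cycle a a h Relation.ReflTransGen.refl

lemma IsDAG.anc_antisymm {G : MixedGraph V} (hG : G.IsDAG) {a b : V}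
    (hab : G.anc a b) (hba : G.anc b a) : a = b := by
  rcases Relation.ReflTransGen.cases_head hab with h | ⟨c, hac, hcb⟩
  · exact h
  · exact absurd (hcb.trans hba) (hG.1.no_dir_cycle a c hac)

lemma anc_induce {G : MixedGraph V} {W : Set V} {a b : V}
    (h : (G.induce W).anc a b) : G.anc a b :=
  anc_mono (G := G.induce W) (H := G) (fun _ _ hd => hd.1) h

end MixedGraph

/-- flip the orientation of an edge mark -/
def EdgeDir.flip : EdgeDir → EdgeDir
  | .fwd => .bwd
  | .bwd => .fwd
  | .bidir => .bidir

lemma headAt2_flip (e : EdgeDir) : headAt2 e.flip ↔ headAt1 e := by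
  cases e <;> simp [EdgeDir.flip, headAt1, headAt2]

lemma headAt1_flip (e : EdgeDir) : headAt1 e.flip ↔ headAt2 e := by
  cases e <;> simp [EdgeDir.flip, headAt1, headAt2]

lemma edirValid_flip {G : MixedGraph V} {a b : V} {e : EdgeDir}
    (h : edirValid G a b e) : edirValid G b a e.flip := by
  cases e with
  | fwd => exact h
  | bwd => exact h
  | bidir => exact G.bi_symm h

namespace MPath

variable {G : MixedGraph V} {u v : V}

lemma edir_cases (hbi : ∀ a b, ¬ G.bi a b) (p : MPath G u v) {i : ℕ} (hi : i < p.len) :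
    (p.edir i = .fwd ∧ G.dir (p.vert i) (p.vert (i + 1))) ∨
    (p.edir i = .bwd ∧ G.dir (p.vert (i + 1)) (p.vert i)) := by
  have h := p.valid i hi
  cases he : p.edir i with
  | fwd => rw [he] at h; exact Or.inl ⟨rfl, h⟩
  | bwd => rw [he] at h; exact Or.inr ⟨rfl, h⟩
  | bidir => rw [he] at h; exact absurd h (hbi _ _)

/-- `p` is unblocked ("good") w.r.t. `Z`. -/
def good (p : MPath G u v) (Z : Set V) : Prop :=
  ∀ i, 0 < i → i < p.len →
    (p.collider i → ∃ w ∈ Z ∪ ({u, v} : Set V), G.anc (p.vert i) w) ∧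
    (¬ p.collider i → p.vert i ∉ Z)

lemma good_iff_not_blocked (p : MPath G u v) (Z : Set V) : p.good Z ↔ ¬ p.blocked Z := by
  constructor
  · rintro h ⟨i, hi0, hil, hcase⟩
    rcases hcase with ⟨hc, hall⟩ | ⟨hc, hz⟩
    · obtain ⟨w, hw, hanc⟩ := (h i hi0 hil).1 hc
      exact hall w hw hanc
    · exact (h i hi0 hil).2 hc hz
  · intro h i hi0 hil
    refine ⟨fun hc => ?_, fun hc hz => h ⟨i, hi0, hil, Or.inr ⟨hc, hz⟩⟩⟩
    by_contra hno
    push_neg at hno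
    exact h ⟨i, hi0, hil, Or.inl ⟨hc, hno⟩⟩

lemma not_mSep_iff {Z : Set V} : ¬ mSep G u v Z ↔ ∃ p : MPath G u v, p.good Z := by
  rw [mSep, not_forall]
  exact exists_congr fun p => (good_iff_not_blocked p Z).symm

/-- Reversal of a path. -/
def reverse (p : MPath G u v) : MPath G v u where
  len := p.len
  len_pos := p.len_pos
  vert i := p.vert (p.len - i)
  edir i := (p.edir (p.len - 1 - i)).flip
  first := by simp [p.last]
  last := by simp [p.first]
  mem i hi := p.mem _ (by omega)
  inj i j hi hj h := by
    have := p.inj _ _ (by omega) (by omega) h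
    omega
  valid i hi := by
    have h1 : p.len - i = (p.len - 1 - i) + 1 := by omega
    have h2 : p.len - (i + 1) = p.len - 1 - i := by omega
    rw [h1, h2]
    exact edirValid_flip (p.valid _ (by omega))

lemma reverse_collider (p : MPath G u v) {i : ℕ} (h0 : 0 < i) (hi : i < p.len) :
    p.reverse.collider i ↔ p.collider (p.len - i) := by
  unfold collider reverse
  simp only
  rw [show p.len - 1 - (i - 1) = p.len - i by omega, show p.len - 1 - i = (p.len - i) - 1 by omega,
    headAt2_flip, headAt1_flip]
  exact and_comm

lemma blocked_of_reverse_blocked (p : MPath G u v) {Z : Set V}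
    (h : p.reverse.blocked Z) : p.blocked Z := by
  obtain ⟨i, hi0, hil, hcase⟩ := h
  have hlen : p.reverse.len = p.len := rfl
  rw [hlen] at hil
  have hvert : p.reverse.vert i = p.vert (p.len - i) := rfl
  have hpair : Z ∪ ({v, u} : Set V) = Z ∪ ({u, v} : Set V) := by rw [Set.pair_comm]
  refine ⟨p.len - i, by omega, by omega, ?_⟩
  rcases hcase with ⟨hc, hall⟩ | ⟨hc, hz⟩
  · refine Or.inl ⟨(p.reverse_collider hi0 hil).mp hc, fun w hw => ?_⟩
    rw [← hvert]
    exact hall w (hpair ▸ hw)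
  · exact Or.inr ⟨fun hcc => hc ((p.reverse_collider hi0 hil).mpr hcc), hvert ▸ hz⟩

end MPath

lemma mSep_symm {G : MixedGraph V} {u v : V} {Z : Set V} (h : mSep G u v Z) :
    mSep G v u Z := fun q => q.blocked_of_reverse_blocked (h q.reverse)

end Aux


section Surgery

variable {V : Type*} {G : MixedGraph V} {u v : V}

namespace MPath

/-- Splice: keep `p` up to index `i`, jump via a direct edge `e` from `p.vert i`
to `p.vert j`, then continue along `p` from index `j`. -/
def splice (p : MPath G u v) (i j : ℕ) (hij : i < j) (hj : j ≤ p.len)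
    (e : EdgeDir) (he : edirValid G (p.vert i) (p.vert j) e) : MPath G u v where
  len := i + 1 + (p.len - j)
  len_pos := by omega
  vert m := if m ≤ i then p.vert m else p.vert (m - i - 1 + j)
  edir m := if m < i then p.edir m else if m = i then e else p.edir (m - i - 1 + j)
  first := by simp [p.first]
  last := by
    show (if i + 1 + (p.len - j) ≤ i then p.vert (i + 1 + (p.len - j))
      else p.vert (i + 1 + (p.len - j) - i - 1 + j)) = v
    rw [if_neg (by omega), show i + 1 + (p.len - j) - i - 1 + j = p.len by omega, p.last]
  mem m hm := by
    show (if m ≤ i then p.vert m else p.vert (m - i - 1 + j)) ∈ G.verts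
    by_cases h : m ≤ i
    · rw [if_pos h]; exact p.mem m (by omega)
    · rw [if_neg h]; exact p.mem _ (by omega)
  inj m1 m2 h1 h2 h := by
    have h' : (if m1 ≤ i then p.vert m1 else p.vert (m1 - i - 1 + j)) =
        (if m2 ≤ i then p.vert m2 else p.vert (m2 - i - 1 + j)) := h
    by_cases k1 : m1 ≤ i <;> by_cases k2 : m2 ≤ i <;>
      [rw [if_pos k1, if_pos k2] at h'; rw [if_pos k1, if_neg k2] at h';
       rw [if_neg k1, if_pos k2] at h'; rw [if_neg k1, if_neg k2] at h']
    · exact p.inj _ _ (by omega) (by omega) h'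
    · have := p.inj _ _ (by omega) (by omega) h'; omega
    · have := p.inj _ _ (by omega) (by omega) h'; omega
    · have := p.inj _ _ (by omega) (by omega) h'; omega
  valid m hm := by
    show edirValid G (if m ≤ i then p.vert m else p.vert (m - i - 1 + j))
      (if m + 1 ≤ i then p.vert (m + 1) else p.vert (m + 1 - i - 1 + j))
      (if m < i then p.edir m else if m = i then e else p.edir (m - i - 1 + j))
    rcases lt_trichotomy m i with h | h | h
    · rw [if_pos (by omega : m ≤ i), if_pos (by omega : m + 1 ≤ i), if_pos h]
      exact p.valid m (by omega)
    · subst h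
      rw [if_pos le_rfl, if_neg (by omega : ¬ m + 1 ≤ m), if_neg (lt_irrefl m),
        if_pos rfl, show m + 1 - m - 1 + j = j by omega]
      exact he
    · rw [if_neg (by omega : ¬ m ≤ i), if_neg (by omega : ¬ m + 1 ≤ i),
        if_neg (by omega : ¬ m < i), if_neg (by omega : m ≠ i),
        show m + 1 - i - 1 + j = m - i - 1 + j + 1 by omega]
      exact p.valid _ (by omega)

lemma splice_len (p : MPath G u v) {i j : ℕ} (hij : i < j) (hj : j ≤ p.len)
    {e : EdgeDir} (he : edirValid G (p.vert i) (p.vert j) e) :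
    (p.splice i j hij hj e he).len = i + 1 + (p.len - j) := rfl

lemma splice_vert (p : MPath G u v) {i j : ℕ} (hij : i < j) (hj : j ≤ p.len)
    {e : EdgeDir} (he : edirValid G (p.vert i) (p.vert j) e) (m : ℕ) :
    (p.splice i j hij hj e he).vert m =
      if m ≤ i then p.vert m else p.vert (m - i - 1 + j) := rfl

lemma splice_edir (p : MPath G u v) {i j : ℕ} (hij : i < j) (hj : j ≤ p.len)
    {e : EdgeDir} (he : edirValid G (p.vert i) (p.vert j) e) (m : ℕ) :
    (p.splice i j hij hj e he).edir m =
      if m < i then p.edir m else if m = i then e else p.edir (m - i - 1 + j) := rfl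

lemma collider_def (p : MPath G u v) (m : ℕ) :
    p.collider m ↔ (headAt2 (p.edir (m - 1)) ∧ headAt1 (p.edir m)) := Iff.rfl

lemma splice_good (p : MPath G u v) {Z : Set V} (hp : p.good Z) (i j : ℕ)
    (hij : i < j) (hj : j ≤ p.len) (e : EdgeDir)
    (he : edirValid G (p.vert i) (p.vert j) e)
    (HL : 0 < i →
      ((headAt1 e ↔ headAt1 (p.edir i)) ∨
       (headAt1 e ∧ ∃ w ∈ Z ∪ ({u, v} : Set V), G.anc (p.vert i) w) ∨
       (¬ headAt1 e ∧ ¬ headAt2 (p.edir (i - 1)))))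
    (HR : j < p.len →
      ((headAt2 e ↔ headAt2 (p.edir (j - 1))) ∨
       (headAt2 e ∧ ∃ w ∈ Z ∪ ({u, v} : Set V), G.anc (p.vert j) w) ∨
       (¬ headAt2 e ∧ ¬ headAt1 (p.edir j)))) :
    (p.splice i j hij hj e he).good Z := by
  set q := p.splice i j hij hj e he with hq
  intro m hm0 hml
  rw [hq, splice_len] at hml
  rcases lt_trichotomy m i with h | h | h
  · -- m < i : unchanged
    have hv : q.vert m = p.vert m := by rw [hq, splice_vert, if_pos (by omega : m ≤ i)]
    have e1 : q.edir (m - 1) = p.edir (m - 1) := by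
      rw [hq, splice_edir, if_pos (by omega : m - 1 < i)]
    have e2 : q.edir m = p.edir m := by rw [hq, splice_edir, if_pos h]
    have hc : q.collider m ↔ p.collider m := by
      rw [collider_def, collider_def, e1, e2]
    rw [hv]
    refine ⟨fun hcc => (hp m hm0 (by omega)).1 (hc.mp hcc), fun hnc =>
      (hp m hm0 (by omega)).2 (fun hcc => hnc (hc.mpr hcc))⟩
  · -- m = i : left junction
    subst h
    have hv : q.vert m = p.vert m := by rw [hq, splice_vert, if_pos le_rfl]
    have e1 : q.edir (m - 1) = p.edir (m - 1) := by
      rw [hq, splice_edir, if_pos (by omega : m - 1 < m)]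
    have e2 : q.edir m = e := by
      rw [hq, splice_edir, if_neg (lt_irrefl m), if_pos rfl]
    have hc : q.collider m ↔ (headAt2 (p.edir (m - 1)) ∧ headAt1 e) := by
      rw [collider_def, e1, e2]
    rw [hv]
    rcases HL hm0 with hiff | ⟨hh, hw⟩ | ⟨hh, ht⟩
    · have hc2 : q.collider m ↔ p.collider m := by
        rw [hc, collider_def, hiff]
      refine ⟨fun hcc => (hp m hm0 (by omega)).1 (hc2.mp hcc), fun hnc =>
        (hp m hm0 (by omega)).2 (fun hcc => hnc (hc2.mpr hcc))⟩
    · refine ⟨fun _ => hw, fun hnc => ?_⟩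
      have : ¬ p.collider m := fun hcc => hnc (hc.mpr ⟨hcc.1, hh⟩)
      exact (hp m hm0 (by omega)).2 this
    · refine ⟨fun hcc => absurd (hc.mp hcc).2 hh, fun _ => ?_⟩
      have : ¬ p.collider m := fun hcc => ht hcc.1
      exact (hp m hm0 (by omega)).2 this
  · rcases eq_or_lt_of_le (Nat.succ_le_of_lt h) with h1 | h1
    · -- m = i + 1 : right junction
      have hm : m = i + 1 := h1.symm
      subst hm
      have hjlt : j < p.len := by omega
      have hv : q.vert (i + 1) = p.vert j := by
        rw [hq, splice_vert, if_neg (by omega : ¬ i + 1 ≤ i),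
          show i + 1 - i - 1 + j = j by omega]
      have e1 : q.edir (i + 1 - 1) = e := by
        rw [show i + 1 - 1 = i by omega, hq, splice_edir, if_neg (lt_irrefl i), if_pos rfl]
      have e2 : q.edir (i + 1) = p.edir j := by
        rw [hq, splice_edir, if_neg (by omega : ¬ i + 1 < i), if_neg (by omega : i + 1 ≠ i),
          show i + 1 - i - 1 + j = j by omega]
      have hc : q.collider (i + 1) ↔ (headAt2 e ∧ headAt1 (p.edir j)) := by
        rw [collider_def, e1, e2]
      rw [hv]
      rcases HR hjlt with hiff | ⟨hh, hw⟩ | ⟨hh, ht⟩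
      · have hc2 : q.collider (i + 1) ↔ p.collider j := by
          rw [hc, collider_def, hiff]
        refine ⟨fun hcc => (hp j (by omega) hjlt).1 (hc2.mp hcc), fun hnc =>
          (hp j (by omega) hjlt).2 (fun hcc => hnc (hc2.mpr hcc))⟩
      · refine ⟨fun _ => hw, fun hnc => ?_⟩
        have : ¬ p.collider j := fun hcc => hnc (hc.mpr ⟨hh, hcc.2⟩)
        exact (hp j (by omega) hjlt).2 this
      · refine ⟨fun hcc => absurd (hc.mp hcc).1 hh, fun _ => ?_⟩
        have : ¬ p.collider j := fun hcc => ht hcc.2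
        exact (hp j (by omega) hjlt).2 this
    · -- m > i + 1 : shifted, unchanged
      have hv : q.vert m = p.vert (m - i - 1 + j) := by
        rw [hq, splice_vert, if_neg (by omega : ¬ m ≤ i)]
      have e1 : q.edir (m - 1) = p.edir (m - i - 1 + j - 1) := by
        rw [hq, splice_edir, if_neg (by omega : ¬ m - 1 < i), if_neg (by omega : m - 1 ≠ i),
          show m - 1 - i - 1 + j = m - i - 1 + j - 1 by omega]
      have e2 : q.edir m = p.edir (m - i - 1 + j) := by
        rw [hq, splice_edir, if_neg (by omega : ¬ m < i), if_neg (by omega : m ≠ i)]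
      have hc : q.collider m ↔ p.collider (m - i - 1 + j) := by
        rw [collider_def, collider_def, e1, e2]
      rw [hv]
      refine ⟨fun hcc => (hp _ (by omega) (by omega)).1 (hc.mp hcc), fun hnc =>
        (hp _ (by omega) (by omega)).2 (fun hcc => hnc (hc.mpr hcc))⟩

/-- Substitute the interior vertex at position `k` by a new vertex `c`,
keeping all edge marks. -/
def substVert (p : MPath G u v) (k : ℕ) (hk0 : 0 < k) (hkl : k < p.len)
    (c : V) (hcv : c ∈ G.verts) (hc : ∀ m, m ≤ p.len → p.vert m ≠ c)
    (h1 : edirValid G (p.vert (k - 1)) c (p.edir (k - 1)))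
    (h2 : edirValid G c (p.vert (k + 1)) (p.edir k)) : MPath G u v where
  len := p.len
  len_pos := p.len_pos
  vert m := if m = k then c else p.vert m
  edir := p.edir
  first := by
    show (if 0 = k then c else p.vert 0) = u
    rw [if_neg (by omega), p.first]
  last := by
    show (if p.len = k then c else p.vert p.len) = v
    rw [if_neg (by omega), p.last]
  mem m hm := by
    show (if m = k then c else p.vert m) ∈ G.verts
    by_cases h : m = k
    · rw [if_pos h]; exact hcv
    · rw [if_neg h]; exact p.mem m hm
  inj m1 m2 hm1 hm2 h := by
    have h' : (if m1 = k then c else p.vert m1) = (if m2 = k then c else p.vert m2) := h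
    by_cases e1 : m1 = k <;> by_cases e2 : m2 = k <;>
      [rw [if_pos e1, if_pos e2] at h'; rw [if_pos e1, if_neg e2] at h';
       rw [if_neg e1, if_pos e2] at h'; rw [if_neg e1, if_neg e2] at h']
    · omega
    · exact absurd h'.symm (hc m2 hm2)
    · exact absurd h' (hc m1 hm1)
    · exact p.inj _ _ hm1 hm2 h'
  valid m hm := by
    show edirValid G (if m = k then c else p.vert m)
      (if m + 1 = k then c else p.vert (m + 1)) (p.edir m)
    rcases eq_or_ne m k with h | h
    · subst h
      rw [if_pos rfl, if_neg (by omega)]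
      exact h2
    · rcases eq_or_ne (m + 1) k with h' | h'
      · rw [if_neg h, if_pos h', show m = k - 1 by omega]
        exact h1
      · rw [if_neg h, if_neg h']
        exact p.valid m hm

lemma substVert_good (p : MPath G u v) {Z : Set V} (hp : p.good Z) (k : ℕ)
    (hk0 : 0 < k) (hkl : k < p.len) (c : V) (hcv : c ∈ G.verts)
    (hc : ∀ m, m ≤ p.len → p.vert m ≠ c)
    (h1 : edirValid G (p.vert (k - 1)) c (p.edir (k - 1)))
    (h2 : edirValid G c (p.vert (k + 1)) (p.edir k))
    (hcol : p.collider k)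
    (hw : ∃ w ∈ Z ∪ ({u, v} : Set V), G.anc c w) :
    (p.substVert k hk0 hkl c hcv hc h1 h2).good Z := by
  intro m hm0 hml
  set q := p.substVert k hk0 hkl c hcv hc h1 h2 with hqdef
  have hlen : q.len = p.len := rfl
  rw [hqdef] at hml
  rw [hlen] at hml
  have hcc : q.collider m ↔ p.collider m := Iff.rfl
  have hv : q.vert m = if m = k then c else p.vert m := rfl
  rcases eq_or_ne m k with h | h
  · subst h
    rw [hv, if_pos rfl]
    exact ⟨fun _ => hw, fun hnc => absurd (hcc.mpr hcol) hnc⟩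
  · rw [hv, if_neg h]
    refine ⟨fun hqc => (hp m hm0 hml).1 (hcc.mp hqc), fun hnc =>
      (hp m hm0 hml).2 (fun hpc => hnc (hcc.mpr hpc))⟩

end MPath

end Surgery


section Transfer

variable {V : Type*} {G : MixedGraph V} {u v : V}

lemma edirValid_of_induce {W : Set V} {a b : V} {e : EdgeDir}
    (h : edirValid (G.induce W) a b e) : edirValid G a b e := by
  cases e with
  | fwd => exact h.1
  | bwd => exact h.1
  | bidir => exact h.1

lemma edirValid_induce {W : Set V} {a b : V} {e : EdgeDir}
    (h : edirValid G a b e) (ha : a ∈ W) (hb : b ∈ W) :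
    edirValid (G.induce W) a b e := by
  cases e with
  | fwd => exact ⟨h, ha, hb⟩
  | bwd => exact ⟨h, hb, ha⟩
  | bidir => exact ⟨h, ha, hb⟩

namespace MPath

/-- A path in an induced subgraph is a path in the big graph. -/
def toSuper {W : Set V} (p : MPath (G.induce W) u v) : MPath G u v where
  len := p.len
  len_pos := p.len_pos
  vert := p.vert
  edir := p.edir
  first := p.first
  last := p.last
  mem m hm := (p.mem m hm).1
  inj := p.inj
  valid m hm := edirValid_of_induce (p.valid m hm)

/-- A path in `G` staying inside `W` is a path of the induced subgraph. -/
def toInduce (p : MPath G u v) (W : Set V) (hW : ∀ m, m ≤ p.len → p.vert m ∈ W) :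
    MPath (G.induce W) u v where
  len := p.len
  len_pos := p.len_pos
  vert := p.vert
  edir := p.edir
  first := p.first
  last := p.last
  mem m hm := ⟨p.mem m hm, hW m hm⟩
  inj := p.inj
  valid m hm := edirValid_induce (p.valid m hm) (hW m (by omega)) (hW (m + 1) (by omega))

end MPath

/-- m-separation in `G` implies m-separation in any induced subgraph
(over the same conditioning set). -/
lemma mSep_induce_of_mSep {W : Set V} {Z : Set V} (h : mSep G u v Z) :
    mSep (G.induce W) u v Z := by
  intro p
  obtain ⟨i, h0, hl, hcase⟩ := h p.toSuper
  refine ⟨i, h0, hl, ?_⟩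
  rcases hcase with ⟨hc, hall⟩ | ⟨hc, hz⟩
  · exact Or.inl ⟨hc, fun w hw hanc => hall w hw (MixedGraph.anc_induce hanc)⟩
  · exact Or.inr ⟨hc, hz⟩

/-- Rerouting directed paths around `x`, given Condition 1. -/
lemma reroute_anc (hG : G.IsDAG) {x : V}
    (C1 : ∀ z ∈ G.children x, G.neighbors x ⊆ G.neighbors z ∪ {z})
    {a b : V} (ha : a ≠ x) (hb : b ≠ x) (h : G.anc a b) :
    Relation.ReflTransGen (fun s t => G.dir s t ∧ s ≠ x ∧ t ≠ x) a b := by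
  obtain ⟨l, hl, hlast⟩ := List.exists_isChain_cons_of_relationReflTransGen h
  clear h
  induction l generalizing a with
  | nil =>
    have : a = b := by simpa using hlast
    exact this ▸ Relation.ReflTransGen.refl
  | cons c l' ih =>
    have hac : G.dir a c := List.isChain_cons_cons.mp hl |>.1
    have hcl : List.IsChain G.dir (c :: l') := (List.isChain_cons_cons.mp hl).2
    have hlast' : List.getLast (c :: l') (List.cons_ne_nil _ _) = b := by
      rw [← hlast, List.getLast_cons_cons]
    rcases eq_or_ne c x with hcx | hcx
    · subst hcx
      -- a → x, then l' continues from x to b; l' nonempty since b ≠ x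
      cases l' with
      | nil =>
        have hcb : c = b := by simpa using hlast'
        exact absurd hcb.symm hb
      | cons s rest =>
        have hxs : G.dir c s := (List.isChain_cons_cons.mp hcl).1
        have hsrest : List.IsChain G.dir (s :: rest) := (List.isChain_cons_cons.mp hcl).2
        have hsx : s ≠ c := fun hh => hG.not_dir_self c (hh ▸ hxs)
        have has : G.dir a s := by
          have hsch : s ∈ G.children c := hxs
          have hane : a ∈ G.neighbors c := ⟨ha, Or.inr (Or.inl hac)⟩
          rcases C1 s hsch hane with hne | heq
          · rcases hne.2 with hd | hd | hd
            · exact absurd ((Relation.ReflTransGen.single hac).tail hxs)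
                (hG.1.no_dir_cycle _ _ hd)
            · exact hd
            · exact absurd hd (hG.2 _ _)
          · exfalso
            have : a = s := heq
            subst this
            exact hG.1.no_dir_cycle a c hac (Relation.ReflTransGen.single hxs)
        have hchain : List.IsChain G.dir (a :: s :: rest) := List.isChain_cons_cons.mpr ⟨has, hsrest⟩
        have hlast'' : List.getLast (a :: s :: rest) (List.cons_ne_nil _ _) = b := by
          rw [List.getLast_cons_cons, ← hlast', List.getLast_cons_cons]
        exact ih ha hchain hlast''
    · exact Relation.ReflTransGen.head ⟨hac, ha, hcx⟩ (ih hcx hcl hlast')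

lemma anc_to_induce (hG : G.IsDAG) {x : V}
    (C1 : ∀ z ∈ G.children x, G.neighbors x ⊆ G.neighbors z ∪ {z})
    {a b : V} (ha : a ≠ x) (hb : b ≠ x) (h : G.anc a b) :
    (G.induce (G.verts \ {x})).anc a b := by
  refine Relation.ReflTransGen.mono ?_ _ _ (reroute_anc hG C1 ha hb h)
  rintro s t ⟨hd, hs, ht⟩
  exact ⟨hd, ⟨(G.dir_mem hd).1, hs⟩, ⟨(G.dir_mem hd).2, ht⟩⟩

/-- A good path avoiding `x` yields a good path in `G - x`. -/
lemma good_toInduce (hG : G.IsDAG) {x : V}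
    (C1 : ∀ z ∈ G.children x, G.neighbors x ⊆ G.neighbors z ∪ {z})
    {Z : Set V} (hux : u ≠ x) (hvx : v ≠ x) (hZx : x ∉ Z)
    (p : MPath G u v) (hp : p.good Z)
    (hW : ∀ m, m ≤ p.len → p.vert m ∈ G.verts \ {x}) :
    (p.toInduce (G.verts \ {x}) hW).good Z := by
  have hav : ∀ m, m ≤ p.len → p.vert m ≠ x := fun m hm => (hW m hm).2
  intro i hi0 hil
  have hil' : i < p.len := hil
  have hcc : (p.toInduce (G.verts \ {x}) hW).collider i ↔ p.collider i := Iff.rfl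
  have hvv : (p.toInduce (G.verts \ {x}) hW).vert i = p.vert i := rfl
  rw [hvv]
  refine ⟨fun hc => ?_, fun hnc => (hp i hi0 hil').2 (fun hc => hnc (hcc.mpr hc))⟩
  obtain ⟨w, hw, hanc⟩ := (hp i hi0 hil').1 (hcc.mp hc)
  refine ⟨w, hw, ?_⟩
  have hwx : w ≠ x := by
    rcases hw with hw | hw
    · exact fun hh => hZx (hh ▸ hw)
    · rcases hw with hw | hw
      · exact hw ▸ hux
      · exact (Set.mem_singleton_iff.mp hw) ▸ hvx
  exact anc_to_induce hG C1 (hav i (by omega)) hwx hanc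

end Transfer

section LocalMarkov

variable {V : Type*} {G : MixedGraph V}

lemma anc_of_fwd_prefix {u v : V} (p : MPath G u v) (k : ℕ) (hk : k ≤ p.len)
    (h : ∀ i, i < k → G.dir (p.vert i) (p.vert (i + 1))) : G.anc u (p.vert k) := by
  induction k with
  | zero => rw [p.first]; exact Relation.ReflTransGen.refl
  | succ n ihn =>
    exact (ihn (by omega) (fun i hi => h i (by omega))).tail (h n (by omega))

/-- Local Markov property: a vertex is m-separated from any non-descendant
non-neighbor by its parents. -/
lemma mSep_parents (hG : ∀ a b : V, G.dir a b → ¬ G.anc b a) (hbi : ∀ a b : V, ¬ G.bi a b)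
    {t s : V} (hts : t ≠ s) (hadj : ¬ G.adj t s) (hanc : ¬ G.anc t s) :
    mSep G t s (G.parents t) := by
  classical
  have antisymm : ∀ a b : V, G.anc a b → G.anc b a → a = b := by
    intro a b hab hba
    rcases Relation.ReflTransGen.cases_head hab with h | ⟨c, hac, hcb⟩
    · exact h
    · exact absurd (hcb.trans hba) (hG a c hac)
  intro p
  -- length-1 paths are impossible
  have hlen2 : 2 ≤ p.len := by
    rcases Nat.lt_or_ge p.len 2 with h2 | h2
    · exfalso
      have h1 : p.len = 1 := by have := p.len_pos; omega
      rcases p.edir_cases hbi (show 0 < p.len by omega) with ⟨_, hd⟩ | ⟨_, hd⟩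
      · rw [p.first, show (0:ℕ)+1 = p.len by omega, p.last] at hd
        exact hanc (Relation.ReflTransGen.single hd)
      · rw [p.first, show (0:ℕ)+1 = p.len by omega, p.last] at hd
        exact hadj (Or.inr (Or.inl hd))
    · exact h2
  by_cases hex : ∃ i, i < p.len ∧ p.edir i = .bwd
  · obtain ⟨hkl, hke⟩ := Nat.find_spec hex
    have hmin : ∀ m, m < Nat.find hex → G.dir (p.vert m) (p.vert (m + 1)) := by
      intro m hm
      rcases p.edir_cases hbi (show m < p.len by omega) with ⟨_, hd⟩ | ⟨he, _⟩
      · exact hd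
      · exact absurd ⟨by omega, he⟩ (Nat.find_min hex hm)
    rcases Nat.eq_zero_or_pos (Nat.find hex) with hk0 | hk0
    · -- first edge points backwards: vert 1 is a non-collider parent of t
      rw [hk0] at hke
      have hd : G.dir (p.vert 1) (p.vert 0) := by
        rcases p.edir_cases hbi (show 0 < p.len by omega) with ⟨he, _⟩ | ⟨_, hd⟩
        · rw [hke] at he; exact absurd he (by simp)
        · exact hd
      refine ⟨1, one_pos, by omega, Or.inr ⟨?_, ?_⟩⟩
      · intro hcc
        have h2 := hcc.1
        simp only [show (1:ℕ) - 1 = 0 by omega] at h2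
        simp [headAt2, hke] at h2
      · rw [p.first] at hd; exact hd
    · -- vert k is a collider which is an ancestor of no relevant vertex
      have htk : G.anc t (p.vert (Nat.find hex)) :=
        anc_of_fwd_prefix p (Nat.find hex) (by omega) hmin
      have htk' : t ≠ p.vert (Nat.find hex) := by
        intro hh
        have h0 : p.vert 0 = p.vert (Nat.find hex) := by rw [p.first, ← hh]
        have := p.inj 0 (Nat.find hex) (by omega) (by omega) h0
        omega
      refine ⟨Nat.find hex, hk0, hkl, Or.inl ⟨⟨?_, ?_⟩, ?_⟩⟩
      · rcases p.edir_cases hbi (show Nat.find hex - 1 < p.len by omega) with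
          ⟨he, _⟩ | ⟨he, _⟩
        · rw [he]; exact Or.inl rfl
        · exact absurd ⟨by omega, he⟩ (Nat.find_min hex (by omega))
      · rw [hke]; exact Or.inl rfl
      · rintro w hw hancw
        rcases hw with hw | hw
        · have : G.anc (p.vert (Nat.find hex)) t := hancw.tail hw
          exact htk' (antisymm _ _ htk this)
        · rcases hw with hw | hw
          · subst hw
            exact htk' (antisymm _ _ htk hancw)
          · rw [Set.mem_singleton_iff] at hw
            subst hw
            exact hanc (htk.trans hancw)
  · -- all edges forward: t is an ancestor of s
    exfalso
    push_neg at hex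
    have hall : ∀ i, i < p.len → G.dir (p.vert i) (p.vert (i + 1)) := by
      intro i hi
      rcases p.edir_cases hbi hi with ⟨_, hd⟩ | ⟨he, _⟩
      · exact hd
      · exact absurd he (hex i hi)
    have := anc_of_fwd_prefix p p.len le_rfl hall
    rw [p.last] at this
    exact hanc this

end LocalMarkov


section MainSurgery

variable {V : Type*} {G : MixedGraph V} {u v : V}

namespace MPath

lemma splice_avoid (p : MPath G u v) {i j : ℕ} (hij : i < j) (hj : j ≤ p.len)
    {e : EdgeDir} (he : edirValid G (p.vert i) (p.vert j) e) {x : V} {k : ℕ}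
    (hk : k ≤ p.len) (hkx : p.vert k = x) (hik : i < k) (hkj : k < j) :
    ∀ m, m ≤ (p.splice i j hij hj e he).len → (p.splice i j hij hj e he).vert m ≠ x := by
  intro m hm
  rw [splice_len] at hm
  rw [splice_vert]
  by_cases h : m ≤ i
  · rw [if_pos h]
    intro hh
    have := p.inj m k (by omega) hk (by rw [hh, hkx])
    omega
  · rw [if_neg h]
    intro hh
    have := p.inj (m - i - 1 + j) k (by omega) hk (by rw [hh, hkx])
    omega

lemma substVert_vert (p : MPath G u v) (k : ℕ) (hk0 : 0 < k) (hkl : k < p.len)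
    (c : V) (hcv : c ∈ G.verts) (hc : ∀ m, m ≤ p.len → p.vert m ≠ c)
    (h1 : edirValid G (p.vert (k - 1)) c (p.edir (k - 1)))
    (h2 : edirValid G c (p.vert (k + 1)) (p.edir k)) (m : ℕ) :
    (p.substVert k hk0 hkl c hcv hc h1 h2).vert m = if m = k then c else p.vert m := rfl

lemma substVert_avoid (p : MPath G u v) (k : ℕ) (hk0 : 0 < k) (hkl : k < p.len)
    (c : V) (hcv : c ∈ G.verts) (hc : ∀ m, m ≤ p.len → p.vert m ≠ c)
    (h1 : edirValid G (p.vert (k - 1)) c (p.edir (k - 1)))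
    (h2 : edirValid G c (p.vert (k + 1)) (p.edir k)) {x : V}
    (hkx : p.vert k = x) (hcx : c ≠ x) :
    ∀ m, m ≤ (p.substVert k hk0 hkl c hcv hc h1 h2).len →
      (p.substVert k hk0 hkl c hcv hc h1 h2).vert m ≠ x := by
  intro m hm
  have hm' : m ≤ p.len := hm
  rw [substVert_vert]
  by_cases h : m = k
  · rw [if_pos h]; exact hcx
  · rw [if_neg h]
    intro hh
    exact h (p.inj m k hm' (by omega) (by rw [hh, hkx]))

end MPath

/-- Main surgery: from a good path, obtain a good path avoiding `x`. -/
lemma exists_good_avoiding (hG : G.IsDAG) {x : V}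
    (C1 : ∀ z ∈ G.children x, G.neighbors x ⊆ G.neighbors z ∪ {z})
    (C2 : ∀ z ∈ G.children x, ∀ w ∈ G.children x ∩ G.parents z,
      G.parents w ⊆ G.parents z)
    {Z : Set V} (hux : u ≠ x) (hvx : v ≠ x) (hZx : x ∉ Z)
    (p : MPath G u v) (hp : p.good Z) :
    ∃ q : MPath G u v, q.good Z ∧ ∀ m, m ≤ q.len → q.vert m ≠ x := by
  by_cases hxp : ∃ k, k ≤ p.len ∧ p.vert k = x
  swap
  · push_neg at hxp
    exact ⟨p, hp, hxp⟩
  obtain ⟨k, hkle, hkx⟩ := hxp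
  have hbi := hG.2
  have hk0 : 0 < k := by
    rcases Nat.eq_zero_or_pos k with h | h
    · exact absurd (by rw [← hkx, h, p.first]) (Ne.symm hux)
    · exact h
  have hkl : k < p.len := by
    rcases eq_or_lt_of_le hkle with h | h
    · exact absurd (by rw [← hkx, h, p.last]) (Ne.symm hvx)
    · exact h
  -- classify the two edges at x
  have hL := p.edir_cases hbi (show k - 1 < p.len by omega)
  rw [show k - 1 + 1 = k by omega, hkx] at hL
  have hR := p.edir_cases hbi (show k < p.len by omega)
  rw [hkx] at hR
  have hax : p.vert (k - 1) ≠ x := by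
    intro hh
    have := p.inj (k - 1) k (by omega) (by omega) (by rw [hh, hkx])
    omega
  have hbx : p.vert (k + 1) ≠ x := by
    intro hh
    have := p.inj (k + 1) k (by omega) (by omega) (by rw [hh, hkx])
    omega
  have hab : p.vert (k - 1) ≠ p.vert (k + 1) := by
    intro hh
    have := p.inj (k - 1) (k + 1) (by omega) (by omega) hh
    omega
  -- helper: a parent of x is a parent of every child of x
  have adj_child : ∀ c, G.dir x c → ∀ n, G.dir n x → n ≠ x → G.dir n c := by
    intro c hxc n hnx hnxne
    rcases C1 c hxc ⟨hnxne, Or.inr (Or.inl hnx)⟩ with h | h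
    · rcases h.2 with hd | hd | hd
      · exact absurd ((Relation.ReflTransGen.single hnx).tail hxc)
          (hG.1.no_dir_cycle _ _ hd)
      · exact hd
      · exact absurd hd (hG.2 _ _)
    · exfalso
      have hnc : n = c := h
      subst hnc
      exact hG.1.no_dir_cycle n x hnx (Relation.ReflTransGen.single hxc)
  -- helper: two distinct children of x are adjacent
  have child_child : ∀ a' b', G.dir x a' → G.dir x b' → a' ≠ b' →
      G.dir a' b' ∨ G.dir b' a' := by
    intro a' b' hxa hxb hne
    have hbn : b' ∈ G.neighbors x := ⟨fun h => hG.not_dir_self x (h ▸ hxb), Or.inl hxb⟩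
    rcases C1 a' hxa hbn with h | h
    · rcases h.2 with hd | hd | hd
      · exact Or.inl hd
      · exact Or.inr hd
      · exact absurd hd (hG.2 _ _)
    · exact absurd (h : b' = a') (Ne.symm hne)
  rcases hL with hL | hL <;> rcases hR with hR | hR
  · -- Case A : a → x → b
    have hdab : G.dir (p.vert (k - 1)) (p.vert (k + 1)) :=
      adj_child _ hR.2 _ hL.2 hax
    refine ⟨p.splice (k - 1) (k + 1) (by omega) (by omega) .fwd hdab,
      p.splice_good hp (k - 1) (k + 1) (by omega) (by omega) .fwd hdab
        (fun hi => Or.inl (by rw [hL.1]))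
        (fun hj => Or.inl (by rw [show k + 1 - 1 = k from rfl, hR.1])),
      p.splice_avoid _ _ _ (by omega) hkx (by omega) (by omega)⟩
  · -- Case C : a → x ← b (collider at x)
    have hcolk : p.collider k :=
      ⟨by rw [hL.1]; exact Or.inl rfl, by rw [hR.1]; exact Or.inl rfl⟩
    obtain ⟨w, hw, hancw⟩ := (hp k hk0 hkl).1 hcolk
    rw [hkx] at hancw
    have hwx : w ≠ x := by
      rcases hw with hw | hw
      · exact fun hh => hZx (hh ▸ hw)
      · rcases hw with hw | hw
        · exact hw ▸ hux
        · exact (Set.mem_singleton_iff.mp hw) ▸ hvx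
    obtain ⟨c, hxc, hcw⟩ : ∃ c, G.dir x c ∧ G.anc c w := by
      rcases Relation.ReflTransGen.cases_head hancw with h | ⟨c, h1, h2⟩
      · exact absurd h.symm hwx
      · exact ⟨c, h1, h2⟩
    have hcx : c ≠ x := fun h => hG.not_dir_self x (h ▸ hxc)
    have hdac : G.dir (p.vert (k - 1)) c := adj_child c hxc _ hL.2 hax
    have hdbc : G.dir (p.vert (k + 1)) c := adj_child c hxc _ hR.2 hbx
    by_cases hcp : ∃ m, m ≤ p.len ∧ p.vert m = c
    · obtain ⟨m0, hm0l, hm0c⟩ := hcp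
      have hm0k : m0 ≠ k := fun h => hcx (by rw [← hm0c, h, hkx])
      have hm0k1 : m0 ≠ k - 1 := by
        intro h
        rw [h] at hm0c
        rw [hm0c] at hdac
        exact hG.not_dir_self c hdac
      have hm0k2 : m0 ≠ k + 1 := by
        intro h
        rw [h] at hm0c
        rw [hm0c] at hdbc
        exact hG.not_dir_self c hdbc
      rcases lt_or_gt_of_ne hm0k with hlt | hgt
      · -- c occurs before x on p
        have hePa : G.dir (p.vert (k + 1)) (p.vert m0) := by rw [hm0c]; exact hdbc
        refine ⟨p.splice m0 (k + 1) (by omega) (by omega) .bwd hePa,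
          p.splice_good hp m0 (k + 1) (by omega) (by omega) .bwd hePa
            (fun hi => Or.inr (Or.inl ⟨Or.inl rfl, ⟨w, hw, by rw [hm0c]; exact hcw⟩⟩))
            (fun hj => Or.inl (by rw [show k + 1 - 1 = k from rfl, hR.1])),
          p.splice_avoid _ _ _ (by omega) hkx (by omega) (by omega)⟩
      · -- c occurs after x on p
        have hePa : G.dir (p.vert (k - 1)) (p.vert m0) := by rw [hm0c]; exact hdac
        refine ⟨p.splice (k - 1) m0 (by omega) (by omega) .fwd hePa,
          p.splice_good hp (k - 1) m0 (by omega) (by omega) .fwd hePa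
            (fun hi => Or.inl (by rw [hL.1]))
            (fun hj => Or.inr (Or.inl ⟨Or.inl rfl, ⟨w, hw, by rw [hm0c]; exact hcw⟩⟩)),
          p.splice_avoid _ _ _ (by omega) hkx (by omega) (by omega)⟩
    · push_neg at hcp
      have h1' : edirValid G (p.vert (k - 1)) c (p.edir (k - 1)) := by
        rw [hL.1]; exact hdac
      have h2' : edirValid G c (p.vert (k + 1)) (p.edir k) := by
        rw [hR.1]; exact hdbc
      refine ⟨p.substVert k hk0 hkl c (G.dir_mem hxc).2 hcp h1' h2',
        p.substVert_good hp k hk0 hkl c (G.dir_mem hxc).2 hcp h1' h2' hcolk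
          ⟨w, hw, hcw⟩,
        p.substVert_avoid k hk0 hkl c (G.dir_mem hxc).2 hcp h1' h2' hkx hcx⟩
  · -- Case D : a ← x → b (x non-collider, both children)
    rcases child_child _ _ hL.2 hR.2 hab with hdab | hdba
    · -- D1 : a → b
      by_cases hcol2 : 0 < k - 1 ∧ headAt2 (p.edir (k - 1 - 1))
      · obtain ⟨hk1, hh2⟩ := hcol2
        have hcef : p.edir (k - 1 - 1) = .fwd ∧
            G.dir (p.vert (k - 1 - 1)) (p.vert (k - 1)) := by
          rcases p.edir_cases hbi (show k - 1 - 1 < p.len by omega) with ⟨he, hd⟩ | ⟨he, _⟩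
          · rw [show k - 1 - 1 + 1 = k - 1 by omega] at hd
            exact ⟨he, hd⟩
          · exfalso
            rw [he] at hh2
            simp [headAt2] at hh2
        have hPa : G.dir (p.vert (k - 1 - 1)) (p.vert (k + 1)) :=
          C2 (p.vert (k + 1)) hR.2 (p.vert (k - 1)) ⟨hL.2, hdab⟩ hcef.2
        refine ⟨p.splice (k - 1 - 1) (k + 1) (by omega) (by omega) .fwd hPa,
          p.splice_good hp (k - 1 - 1) (k + 1) (by omega) (by omega) .fwd hPa
            (fun hi => Or.inl (by rw [hcef.1]))
            (fun hj => Or.inl (by rw [show k + 1 - 1 = k from rfl, hR.1])),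
          p.splice_avoid _ _ _ (by omega) hkx (by omega) (by omega)⟩
      · refine ⟨p.splice (k - 1) (k + 1) (by omega) (by omega) .fwd hdab,
          p.splice_good hp (k - 1) (k + 1) (by omega) (by omega) .fwd hdab
            (fun hi => Or.inr (Or.inr ⟨by simp [headAt1], fun hh => hcol2 ⟨hi, hh⟩⟩))
            (fun hj => Or.inl (by rw [show k + 1 - 1 = k from rfl, hR.1])),
          p.splice_avoid _ _ _ (by omega) hkx (by omega) (by omega)⟩
    · -- D2 : b → a
      by_cases hcol2 : k + 1 < p.len ∧ headAt1 (p.edir (k + 1))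
      · obtain ⟨hk2, hh1⟩ := hcol2
        have hceb : p.edir (k + 1) = .bwd ∧
            G.dir (p.vert (k + 2)) (p.vert (k + 1)) := by
          rcases p.edir_cases hbi hk2 with ⟨he, _⟩ | ⟨he, hd⟩
          · exfalso
            rw [he] at hh1
            simp [headAt1] at hh1
          · rw [show k + 1 + 1 = k + 2 from rfl] at hd
            exact ⟨he, hd⟩
        have hPa : G.dir (p.vert (k + 2)) (p.vert (k - 1)) :=
          C2 (p.vert (k - 1)) hL.2 (p.vert (k + 1)) ⟨hR.2, hdba⟩ hceb.2
        refine ⟨p.splice (k - 1) (k + 2) (by omega) (by omega) .bwd hPa,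
          p.splice_good hp (k - 1) (k + 2) (by omega) (by omega) .bwd hPa
            (fun hi => Or.inl (by rw [hL.1]))
            (fun hj => Or.inl (by rw [show k + 2 - 1 = k + 1 from rfl, hceb.1])),
          p.splice_avoid _ _ _ (by omega) hkx (by omega) (by omega)⟩
      · refine ⟨p.splice (k - 1) (k + 1) (by omega) (by omega) .bwd hdba,
          p.splice_good hp (k - 1) (k + 1) (by omega) (by omega) .bwd hdba
            (fun hi => Or.inl (by rw [hL.1]))
            (fun hj => Or.inr (Or.inr ⟨by simp [headAt2], fun hh => hcol2 ⟨hj, hh⟩⟩)),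
          p.splice_avoid _ _ _ (by omega) hkx (by omega) (by omega)⟩
  · -- Case B : a ← x ← b
    have hdba : G.dir (p.vert (k + 1)) (p.vert (k - 1)) :=
      adj_child _ hL.2 _ hR.2 hbx
    refine ⟨p.splice (k - 1) (k + 1) (by omega) (by omega) .bwd hdba,
      p.splice_good hp (k - 1) (k + 1) (by omega) (by omega) .bwd hdba
        (fun hi => Or.inl (by rw [hL.1]))
        (fun hj => Or.inl (by rw [show k + 1 - 1 = k from rfl, hR.1])),
      p.splice_avoid _ _ _ (by omega) hkx (by omega) (by omega)⟩

end MainSurgery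


section Assembly

variable {V : Type*}

namespace MPath

/-- An explicit two-edge path. -/
def ofTwo (G : MixedGraph V) (a b c : V) (hab : a ≠ b) (hbc : b ≠ c) (hac : a ≠ c)
    (ha : a ∈ G.verts) (hb : b ∈ G.verts) (hc : c ∈ G.verts)
    (e1 e2 : EdgeDir) (h1 : edirValid G a b e1) (h2 : edirValid G b c e2) :
    MPath G a c where
  len := 2
  len_pos := by omega
  vert m := if m = 0 then a else if m = 1 then b else c
  edir m := if m = 0 then e1 else e2
  first := by simp
  last := by norm_num
  mem m hm := by interval_cases m <;> simp [ha, hb, hc]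
  inj i j hi hj h := by
    have hba := hab.symm; have hcb := hbc.symm; have hca := hac.symm
    interval_cases i <;> interval_cases j <;> simp_all
  valid m hm := by
    interval_cases m
    · simpa using h1
    · simpa using h2

/-- An explicit three-edge path. -/
def ofThree (G : MixedGraph V) (a b c d : V) (hab : a ≠ b) (hac : a ≠ c) (had : a ≠ d)
    (hbc : b ≠ c) (hbd : b ≠ d) (hcd : c ≠ d)
    (ha : a ∈ G.verts) (hb : b ∈ G.verts) (hc : c ∈ G.verts) (hd : d ∈ G.verts)
    (e1 e2 e3 : EdgeDir) (h1 : edirValid G a b e1) (h2 : edirValid G b c e2)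
    (h3 : edirValid G c d e3) : MPath G a d where
  len := 3
  len_pos := by omega
  vert m := if m = 0 then a else if m = 1 then b else if m = 2 then c else d
  edir m := if m = 0 then e1 else if m = 1 then e2 else e3
  first := by simp
  last := by norm_num
  mem m hm := by interval_cases m <;> simp [ha, hb, hc, hd]
  inj i j hi hj h := by
    have hba := hab.symm; have hca := hac.symm; have hda := had.symm
    have hcb := hbc.symm; have hdb := hbd.symm; have hdc := hcd.symm
    interval_cases i <;> interval_cases j <;> simp_all
  valid m hm := by
    interval_cases m
    · simpa using h1
    · simpa using h2
    · simpa using h3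

end MPath

/-- Scaffold: if `x` is removable but `a`, `b` are non-adjacent vertices that cannot
be m-separated in `G` by any set avoiding `x`, contradiction. -/
lemma removable_contra {G : MixedGraph V} (hG : G.IsDAG) {x a b : V}
    (hrem : G.Removable x)
    (ha : a ∈ G.verts) (hb : b ∈ G.verts) (hax : a ≠ x) (hbx : b ≠ x) (hab : a ≠ b)
    (hnadj : ¬ G.adj a b)
    (hcon : ∀ Z' : Set V, x ∉ Z' → ¬ mSep G a b Z') : False := by
  set H := G.induce (G.verts \ {x}) with hH
  have hH1 : ∀ a' b' : V, H.dir a' b' → ¬ H.anc b' a' :=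
    fun a' b' hd hanc => hG.1.no_dir_cycle a' b' hd.1 (MixedGraph.anc_induce hanc)
  have hH2 : ∀ a' b' : V, ¬ H.bi a' b' := fun a' b' h => hG.2 a' b' h.1
  have antisymH : ∀ a' b' : V, H.anc a' b' → H.anc b' a' → a' = b' := by
    intro a' b' h1 h2
    rcases Relation.ReflTransGen.cases_head h1 with h | ⟨c, hac, hcb⟩
    · exact h
    · exact absurd (hcb.trans h2) (hH1 a' c hac)
  have hnadjH : ¬ H.adj a b := by
    rintro (hd | hd | hd)
    · exact hnadj (Or.inl hd.1)
    · exact hnadj (Or.inr (Or.inl hd.1))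
    · exact hnadj (Or.inr (Or.inr hd.1))
  have hnadjH' : ¬ H.adj b a := fun h => hnadjH (H.adj_symm h)
  have hxPa : ∀ t : V, x ∉ H.parents t := fun t hxt => hxt.2.1.2 rfl
  by_cases hanc : H.anc a b
  · have hanc' : ¬ H.anc b a := fun h => hab (antisymH _ _ hanc h)
    have hsep : mSep H b a (H.parents b) :=
      mSep_parents hH1 hH2 hab.symm hnadjH' hanc'
    have hsep' : mSep H a b (H.parents b) := mSep_symm hsep
    have hZsub : H.parents b ⊆ G.verts \ {x, a, b} := by
      intro n hn
      refine ⟨(G.dir_mem hn.1).1, ?_⟩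
      rintro (h | h | h)
      · exact hn.2.1.2 h
      · exact hnadj (by rw [← h]; exact Or.inl hn.1)
      · rw [Set.mem_singleton_iff] at h
        subst h
        exact hG.not_dir_self n hn.1
    have := (hrem a b ha hb hax hbx hab (H.parents b) hZsub).mpr hsep'
    exact hcon (H.parents b) (hxPa b) this
  · have hsep : mSep H a b (H.parents a) :=
      mSep_parents hH1 hH2 hab hnadjH hanc
    have hZsub : H.parents a ⊆ G.verts \ {x, a, b} := by
      intro n hn
      refine ⟨(G.dir_mem hn.1).1, ?_⟩
      rintro (h | h | h)
      · exact hn.2.1.2 h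
      · subst h
        exact hG.not_dir_self n hn.1
      · rw [Set.mem_singleton_iff] at h
        subst h
        exact hnadj (Or.inr (Or.inl hn.1))
    have := (hrem a b ha hb hax hbx hab (H.parents a) hZsub).mpr hsep
    exact hcon (H.parents a) (hxPa a) this

end Assembly


section FinalPieces

variable {V : Type*}

lemma ofTwo_good (G : MixedGraph V) (a b c : V) (hab : a ≠ b) (hbc : b ≠ c)
    (hac : a ≠ c) (ha : a ∈ G.verts) (hb : b ∈ G.verts) (hc : c ∈ G.verts)
    (e1 : EdgeDir) (h1 : edirValid G a b e1) (h2 : edirValid G b c .fwd)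
    (Z' : Set V) (hbZ : b ∉ Z') :
    (MPath.ofTwo G a b c hab hbc hac ha hb hc e1 .fwd h1 h2).good Z' := by
  intro i hi0 hil
  have hil' : i < 2 := hil
  have hi1 : i = 1 := by omega
  subst hi1
  refine ⟨fun hcc => absurd hcc.2 ?_, fun _ => hbZ⟩
  rw [show (MPath.ofTwo G a b c hab hbc hac ha hb hc e1 .fwd h1 h2).edir 1 = .fwd
    from rfl]
  simp [headAt1]

lemma ofThree_good (G : MixedGraph V) (a b c d : V) (hab : a ≠ b) (hac : a ≠ c)
    (had : a ≠ d) (hbc : b ≠ c) (hbd : b ≠ d) (hcd : c ≠ d)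
    (ha : a ∈ G.verts) (hb : b ∈ G.verts) (hc : c ∈ G.verts) (hd : d ∈ G.verts)
    (h1 : edirValid G a b .fwd) (h2 : edirValid G b c .bwd)
    (h3 : edirValid G c d .fwd)
    (Z' : Set V) (hcZ : c ∉ Z') (hbd' : G.anc b d) :
    (MPath.ofThree G a b c d hab hac had hbc hbd hcd ha hb hc hd
      .fwd .bwd .fwd h1 h2 h3).good Z' := by
  intro i hi0 hil
  have hil' : i < 3 := hil
  interval_cases i
  · refine ⟨fun _ => ⟨d, Or.inr (Or.inr rfl), hbd'⟩, fun hnc => absurd ?_ hnc⟩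
    exact ⟨Or.inl rfl, Or.inl rfl⟩
  · refine ⟨fun hcc => absurd hcc.1 ?_, fun _ => hcZ⟩
    rw [show (MPath.ofThree G a b c d hab hac had hbc hbd hcd ha hb hc hd
      .fwd .bwd .fwd h1 h2 h3).edir (2 - 1) = .bwd from rfl]
    simp [headAt2]

end FinalPieces


/-- A vertex `X` is removable in a DAG `G` iff for every child `Z` of
`X`: (1) `Ne(X) ⊆ Ne(Z) ∪ {Z}`, and (2) `Pa(V) ⊆ Pa(Z)` for every `V ∈ Ch(X) ∩ Pa(Z)`. -/
theorem stmt_1 {V : Type*} [Fintype V] (G : MixedGraph V) (hG : G.IsDAG)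
    (x : V) (hx : x ∈ G.verts) :
    G.Removable x ↔
      ∀ z ∈ G.children x,
        (G.neighbors x ⊆ G.neighbors z ∪ {z}) ∧
        (∀ v ∈ G.children x ∩ G.parents z, G.parents v ⊆ G.parents z) := by
  constructor
  · intro hrem z0 hz0
    have hz0x : z0 ≠ x := fun h => hG.not_dir_self x (h ▸ hz0)
    have hxz0 : x ≠ z0 := Ne.symm hz0x
    have hz0v : z0 ∈ G.verts := (G.dir_mem hz0).2
    constructor
    · -- Condition 1
      by_contra hC1
      rw [Set.not_subset] at hC1
      obtain ⟨w0, hw0n, hw0nb⟩ := hC1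
      have hw0x : w0 ≠ x := hw0n.1
      have hadjxw : G.adj x w0 := hw0n.2
      have hw0v : w0 ∈ G.verts := by
        rcases hadjxw with h | h | h
        · exact (G.dir_mem h).2
        · exact (G.dir_mem h).1
        · exact (G.bi_mem h).2
      have hw0z0 : w0 ≠ z0 := fun h => hw0nb (Or.inr (by simp [h]))
      have hnadjzw : ¬ G.adj z0 w0 := fun h => hw0nb (Or.inl ⟨hw0z0, h⟩)
      have hnadjwz : ¬ G.adj w0 z0 := fun h => hnadjzw (G.adj_symm h)
      refine removable_contra hG hrem hw0v hz0v hw0x hz0x hw0z0 hnadjwz ?_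
      intro Z' hxZ'
      rw [MPath.not_mSep_iff]
      rcases hadjxw with hxw | hwx | hbb
      · exact ⟨MPath.ofTwo G w0 x z0 hw0x hxz0 hw0z0 hw0v hx hz0v .bwd .fwd hxw hz0,
          ofTwo_good G w0 x z0 hw0x hxz0 hw0z0 hw0v hx hz0v .bwd hxw hz0 Z' hxZ'⟩
      · exact ⟨MPath.ofTwo G w0 x z0 hw0x hxz0 hw0z0 hw0v hx hz0v .fwd .fwd hwx hz0,
          ofTwo_good G w0 x z0 hw0x hxz0 hw0z0 hw0v hx hz0v .fwd hwx hz0 Z' hxZ'⟩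
      · exact absurd hbb (hG.2 _ _)
    · -- Condition 2
      by_contra hC2
      push_neg at hC2
      obtain ⟨v0, hv0, hns⟩ := hC2
      rw [Set.not_subset] at hns
      obtain ⟨c0, hc0v, hc0z⟩ := hns
      have hxv0 : G.dir x v0 := hv0.1
      have hv0z0 : G.dir v0 z0 := hv0.2
      have hc0x : c0 ≠ x := fun h => hc0z (h ▸ hz0)
      have hc0v0 : c0 ≠ v0 := fun h => hG.not_dir_self v0 (h ▸ hc0v)
      have hc0z0 : c0 ≠ z0 := by
        intro h
        exact hG.1.no_dir_cycle v0 z0 hv0z0 (Relation.ReflTransGen.single (h ▸ hc0v))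
      have hv0x : v0 ≠ x := fun h => hG.not_dir_self x (h ▸ hxv0)
      have hv0z0' : v0 ≠ z0 := fun h => hG.not_dir_self z0 (h ▸ hv0z0)
      have hc0vv : c0 ∈ G.verts := (G.dir_mem hc0v).1
      have hv0vv : v0 ∈ G.verts := (G.dir_mem hc0v).2
      have hnadj : ¬ G.adj c0 z0 := by
        rintro (h | h | h)
        · exact hc0z h
        · exact hG.1.no_dir_cycle z0 c0 h
            ((Relation.ReflTransGen.single hc0v).tail hv0z0)
        · exact hG.2 _ _ h
      refine removable_contra hG hrem hc0vv hz0v hc0x hz0x hc0z0 hnadj ?_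
      intro Z' hxZ'
      rw [MPath.not_mSep_iff]
      exact ⟨MPath.ofThree G c0 v0 x z0 hc0v0 hc0x hc0z0 hv0x hv0z0' hxz0
          hc0vv hv0vv hx hz0v .fwd .bwd .fwd hc0v hxv0 hz0,
        ofThree_good G c0 v0 x z0 hc0v0 hc0x hc0z0 hv0x hv0z0' hxz0
          hc0vv hv0vv hx hz0v hc0v hxv0 hz0 Z' hxZ'
          (Relation.ReflTransGen.single hv0z0)⟩
  · intro hC y z hy hz hyx hzx hyz Z hZ
    have C1' : ∀ z' ∈ G.children x, G.neighbors x ⊆ G.neighbors z' ∪ {z'} :=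
      fun z' hz' => (hC z' hz').1
    have C2' : ∀ z' ∈ G.children x, ∀ w ∈ G.children x ∩ G.parents z',
        G.parents w ⊆ G.parents z' := fun z' hz' => (hC z' hz').2
    have hZx : x ∉ Z := fun h => (hZ h).2 (by simp)
    constructor
    · exact fun h => mSep_induce_of_mSep h
    · intro hsep
      by_contra hns
      rw [MPath.not_mSep_iff] at hns
      obtain ⟨p, hp⟩ := hns
      obtain ⟨q, hq, hav⟩ := exists_good_avoiding hG C1' C2' hyx hzx hZx p hp
      have hW : ∀ m, m ≤ q.len → q.vert m ∈ G.verts \ {x} :=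
        fun m hm => ⟨q.mem m hm, hav m hm⟩
      exact (MPath.not_mSep_iff.mpr
        ⟨q.toInduce _ hW, good_toInduce hG C1' hyx hzx hZx q hq hW⟩) hsep
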